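/- Let G be a group with finite symmetric generating set X such that Geo(G,X) is k-locally testable for some k ≥ 1, and set N = 2k(|X|^{2k} + 1). If w is a word over X with |w| ≥ N that represents an element g of finite order in G, then there exists a word v over X with |v| < |w| that represents a conjugate of g in G. -/

import Mathlib

/-! By pigeonhole among the `|X|^{2k} + 1` disjoint blocks of length `2k` of `w`, we can write
`w = v₁ x v₂ x v₃` with `|x| = 2k`. Cutting `x = x₁ x₂` in half and rotating `w` gives
`r = x₂ v₂ x₁ x₂ v₃ v₁ x₁`, a word of the same length representing a conjugate of `g`. The factor
of `r r` read across the seam is `suf_{k-1}(x₁) pre_{k-1}(x₂)`, a factor of `x₁ x₂` and hence of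
`r`, so every power `rⁿ⁺¹` has the same `k`-factors, prefix and suffix as `r`. For `gⁿ = 1` the
word `rⁿ⁺¹` is longer than `r` and represents the same element, so it is not geodesic; by local
testability neither is `r`. -/

/-- `pre_{k-1}`, `suf_{k-1}` and `sub_k` agree: the equivalence `∼_k` on words. -/
def SimK {A : Type*} (k : ℕ) (u v : List A) : Prop :=
  u.take (k - 1) = v.take (k - 1) ∧
  u.drop (u.length - (k - 1)) = v.drop (v.length - (k - 1)) ∧
  ∀ s : List A, s.length = k → (s <:+: u ↔ s <:+: v)

/-- A language `L` is `k`-locally testable if membership is invariant under `∼_k`. -/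
def LocallyTestable {A : Type*} (k : ℕ) (L : Set (List A)) : Prop :=
  ∀ u v : List A, SimK k u v → (u ∈ L ↔ v ∈ L)

/-- The syntactic congruence of a language: `u ∼_L v` iff `sut ∈ L ↔ svt ∈ L` for all `s, t`. -/
def SynCong {A : Type*} (L : Set (List A)) (u v : List A) : Prop :=
  ∀ s t : List A, s ++ u ++ t ∈ L ↔ s ++ v ++ t ∈ L

/-- The element of `G` represented by a word over the generating set `X`. -/
def wordProd {G : Type*} [Group G] {X : Set G} (w : List X) : G :=
  (w.map Subtype.val).prod

/-- A word over `X` is geodesic if no word representing the same element is shorter. -/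
def IsGeodesic {G : Type*} [Group G] (X : Set G) (w : List X) : Prop :=
  ∀ v : List X, wordProd v = wordProd w → w.length ≤ v.length

/-- The language of all geodesic words over `X`. -/
def Geo {G : Type*} [Group G] (X : Set G) : Set (List X) :=
  {w | IsGeodesic X w}

/-- The `j`-th power of a word in the free monoid (concatenation of `j` copies). -/
def listPow {A : Type*} (w : List A) : ℕ → List A
  | 0 => []
  | n + 1 => w ++ listPow w n

namespace List

variable {A : Type*}

/-- The factor `suf_{k-1}(r) pre_{k-1}(r)` read across the seam between two copies of `r`. -/
def junction (k : ℕ) (r : List A) : List A :=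
  r.drop (r.length - (k - 1)) ++ r.take (k - 1)

lemma infix_append_take_or_infix {s a b : List A} {k : ℕ} (hs : s.length = k)
    (h : s <:+: a ++ b) : s <:+: a ++ b.take (k - 1) ∨ s <:+: b := by
  obtain ⟨p, q, hpq⟩ := h
  by_cases hp : a.length ≤ p.length
  · right
    have h1 := congrArg (drop a.length) hpq
    rw [append_assoc, drop_append_of_le_length hp, drop_left] at h1
    exact ⟨p.drop a.length, q, by rw [append_assoc]; exact h1⟩
  · left
    obtain ⟨m, hm⟩ : ∃ m, a.length + (k - 1) = (p ++ s).length + m :=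
      ⟨a.length + (k - 1) - (p.length + k), by simp only [length_append]; omega⟩
    have h1 := congrArg (take (a.length + (k - 1))) hpq
    rw [take_length_add_append, hm, take_length_add_append] at h1
    exact ⟨p, q.take m, h1⟩

lemma infix_or_infix_drop_append {s a b : List A} {k : ℕ} (hs : s.length = k)
    (h : s <:+: a ++ b) : s <:+: a ∨ s <:+: a.drop (a.length - (k - 1)) ++ b := by
  subst hs
  rw [← reverse_infix, reverse_append] at h
  rcases infix_append_take_or_infix (length_reverse (as := s)) h with h | h
  · right
    rwa [take_reverse, ← reverse_append, reverse_infix] at h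
  · exact .inl (reverse_infix.mp h)

lemma infix_append_cases {s a b : List A} {k : ℕ} (hs : s.length = k) (h : s <:+: a ++ b) :
    s <:+: a ∨ s <:+: b ∨ s <:+: a.drop (a.length - (k - 1)) ++ b.take (k - 1) := by
  rcases infix_append_take_or_infix hs h with h | h
  · rcases infix_or_infix_drop_append hs h with h | h
    · exact .inl h
    · exact .inr (.inr h)
  · exact .inr (.inl h)

lemma listPow_succ (r : List A) (m : ℕ) : listPow r (m + 1) = r ++ listPow r m := rfl

lemma listPow_succ' (r : List A) : ∀ m, listPow r (m + 1) = listPow r m ++ r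
  | 0 => by simp [listPow]
  | m + 1 => by
    change r ++ listPow r (m + 1) = (r ++ listPow r m) ++ r
    rw [listPow_succ' r m, append_assoc]

lemma length_listPow (r : List A) : ∀ m, (listPow r m).length = m * r.length
  | 0 => by simp [listPow]
  | m + 1 => by rw [listPow_succ, length_append, length_listPow r m, Nat.succ_mul, Nat.add_comm]

lemma infix_of_infix_listPow {s r : List A} {k : ℕ} (hs : s.length = k)
    (hkr : k - 1 ≤ r.length) (hJ : junction k r <:+: r) : ∀ m, s <:+: listPow r m → s <:+: r
  | 0, h => by
    rw [show listPow r 0 = [] from rfl, infix_nil] at h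
    exact h ▸ nil_infix
  | m + 1, h => by
    rw [listPow_succ] at h
    rcases infix_append_cases hs h with h | h | h
    · exact h
    · exact infix_of_infix_listPow hs hkr hJ m h
    · cases m with
      | zero => exact h.trans (by simpa [listPow] using (drop_suffix _ r).isInfix)
      | succ m =>
        rw [listPow_succ, take_append_of_le_length hkr] at h
        exact h.trans hJ

lemma simK_listPow_succ {r : List A} {k : ℕ} (hkr : k - 1 ≤ r.length)
    (hJ : junction k r <:+: r) (m : ℕ) : SimK k r (listPow r (m + 1)) := by
  refine ⟨?_, ?_, fun s hs => ⟨fun h => h.trans ?_, infix_of_infix_listPow hs hkr hJ _⟩⟩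
  · rw [listPow_succ, take_append_of_le_length hkr]
  · rw [listPow_succ', drop_append, length_append,
      drop_eq_nil_of_le (as := listPow r m) (by omega), nil_append]
    congr 1
    omega
  · rw [listPow_succ]
    exact (prefix_append r _).isInfix

lemma junction_infix_of_append {x₁ x₂ u : List A} {k : ℕ} (h₁ : k - 1 ≤ x₁.length)
    (h₂ : k - 1 ≤ x₂.length) : junction k (x₂ ++ u ++ x₁) <:+: x₁ ++ x₂ := by
  have hdrop : (x₂ ++ u ++ x₁).drop ((x₂ ++ u ++ x₁).length - (k - 1)) =
      x₁.drop (x₁.length - (k - 1)) := by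
    rw [drop_append, drop_eq_nil_of_le (by simp only [length_append]; omega), nil_append]
    congr 1
    simp only [length_append]
    omega
  rw [junction, hdrop, append_assoc, take_append_of_le_length h₂]
  exact ⟨x₁.take (x₁.length - (k - 1)), x₂.drop (k - 1), by
    rw [← append_assoc, take_append_drop, append_assoc, take_append_drop]⟩

lemma exists_eq_append_append_of_take_drop_eq {w : List A} {a b m : ℕ} (hab : a + m ≤ b)
    (h : (w.drop a).take m = (w.drop b).take m) :
    ∃ v₁ v₂ v₃, w = v₁ ++ (w.drop a).take m ++ v₂ ++ (w.drop a).take m ++ v₃ := by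
  refine ⟨w.take a, (w.drop (a + m)).take (b - (a + m)), w.drop (b + m), ?_⟩
  conv_lhs => rw [← take_append_drop a w, ← take_append_drop m (w.drop a), drop_drop,
    ← take_append_drop (b - (a + m)) (w.drop (a + m)), drop_drop, Nat.add_sub_cancel' hab,
    ← take_append_drop m (w.drop b), drop_drop, ← h]
  simp only [append_assoc]

lemma exists_repeated_factor [Finite A] {m : ℕ} {w : List A}
    (hw : m * (Nat.card A ^ m + 1) ≤ w.length) :
    ∃ v₁ x v₂ v₃, x.length = m ∧ w = v₁ ++ x ++ v₂ ++ x ++ v₃ := by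
  classical
  have := Fintype.ofFinite A
  have hblock (i : Fin (Nat.card A ^ m + 1)) : m * i + m ≤ w.length := by
    have := Nat.mul_le_mul_left m i.isLt
    rw [Nat.mul_succ] at this
    omega
  let f (i : Fin (Nat.card A ^ m + 1)) : Vector A m :=
    ⟨(w.drop (m * i)).take m, by simp only [length_take, length_drop]; have := hblock i; omega⟩
  obtain ⟨i, j, hij, hf⟩ :=
    Fintype.exists_ne_map_eq_of_card_lt f (by simp [Nat.card_eq_fintype_card])
  wlog hlt : i < j generalizing i j
  · exact this j i hij.symm hf.symm (lt_of_le_of_ne (not_lt.mp hlt) hij.symm)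
  have hab : m * i + m ≤ m * j := by
    have := Nat.mul_le_mul_left m (Fin.lt_def.mp hlt)
    rw [Nat.mul_succ] at this
    exact this
  obtain ⟨v₁, v₂, v₃, hw⟩ := exists_eq_append_append_of_take_drop_eq hab (congrArg Subtype.val hf)
  exact ⟨v₁, _, v₂, v₃, (f i).2, hw⟩

end List

section WordProd

variable {G : Type*} [Group G] {X : Set G}

lemma wordProd_append (u v : List X) : wordProd (u ++ v) = wordProd u * wordProd v := by
  simp [wordProd]

lemma wordProd_listPow (r : List X) : ∀ m, wordProd (listPow r m) = wordProd r ^ m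
  | 0 => by simp [listPow, wordProd]
  | m + 1 => by rw [List.listPow_succ, wordProd_append, wordProd_listPow r m, pow_succ']

lemma isConj_wordProd_append_comm (u v : List X) :
    IsConj (wordProd (u ++ v)) (wordProd (v ++ u)) :=
  isConj_iff.mpr ⟨wordProd v, by simp only [wordProd_append]; group⟩

lemma not_isGeodesic_listPow {r : List X} (hr : r ≠ []) {n : ℕ} (hn : 0 < n)
    (h : wordProd r ^ n = 1) : ¬IsGeodesic X (listPow r (n + 1)) := fun hgeo => by
  have hle := hgeo r (by rw [wordProd_listPow, pow_succ, h, one_mul])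
  rw [List.length_listPow] at hle
  have := List.length_pos_iff.mpr hr
  nlinarith

/-- `r ∼_k rⁿ⁺¹`, and if `wordProd r ^ n = 1` the longer word `rⁿ⁺¹` represents the same
element as `r`. -/
theorem not_mem_geo_of_junction_infix {k : ℕ} (hlt : LocallyTestable k (Geo X)) {r : List X}
    (hr : r ≠ []) (hkr : k - 1 ≤ r.length) (hJ : r.junction k <:+: r)
    (hfin : IsOfFinOrder (wordProd r)) : r ∉ Geo X := by
  obtain ⟨n, hn, hpow⟩ := isOfFinOrder_iff_pow_eq_one.mp hfin
  rw [hlt _ _ (List.simK_listPow_succ hkr hJ n)]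
  exact not_isGeodesic_listPow hr hn hpow

end WordProd

theorem stmt10_general {G : Type*} [Group G] (X : Set G)
    (hfin : X.Finite) (k : ℕ) (hk : 1 ≤ k) (hlt : LocallyTestable k (Geo X))
    (w : List X) (hw : 2 * k * (Nat.card X ^ (2 * k) + 1) ≤ w.length)
    (g : G) (hg : wordProd w = g) (hord : IsOfFinOrder g) :
    ∃ v : List X, v.length < w.length ∧ IsConj g (wordProd v) := by
  have : Finite X := hfin
  obtain ⟨v₁, x, v₂, v₃, hx, rfl⟩ := List.exists_repeated_factor hw
  set x₁ := x.take k
  set x₂ := x.drop k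
  have hsplit : x = x₁ ++ x₂ := (List.take_append_drop k x).symm
  set r := x₂ ++ (v₂ ++ x₁ ++ x₂ ++ v₃ ++ v₁) ++ x₁
  have hlen : r.length = (v₁ ++ x ++ v₂ ++ x ++ v₃).length := by
    simp only [r, hsplit, List.length_append]
    omega
  have hconj : IsConj g (wordProd r) := by
    convert isConj_wordProd_append_comm (v₁ ++ x₁) (x₂ ++ v₂ ++ x₁ ++ x₂ ++ v₃) using 2
    · rw [← hg, hsplit]
      simp only [List.append_assoc]
    · simp only [r, List.append_assoc]
  have hJ : r.junction k <:+: r :=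
    (List.junction_infix_of_append (by simp only [x₁, List.length_take]; omega)
        (by simp only [x₂, List.length_drop]; omega)).trans
      (by simpa only [r, List.append_assoc] using
        List.infix_append (x₂ ++ v₂) (x₁ ++ x₂) (v₃ ++ v₁ ++ x₁))
  have h2k : 2 * k ≤ r.length := hlen ▸ (Nat.le_mul_of_pos_right _ (Nat.succ_pos _)).trans hw
  have hr := not_mem_geo_of_junction_infix hlt (List.ne_nil_of_length_pos (by omega)) (by omega)
    hJ (hconj.isOfFinOrder hord)
  obtain ⟨v, hv, hvlen⟩ : ∃ v, wordProd v = wordProd r ∧ v.length < r.length := by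
    simpa [Geo, IsGeodesic] using hr
  exact ⟨v, hlen ▸ hvlen, hv ▸ hconj⟩

/-- If `Geo(G,X)` is `k`-locally testable and `w` is a word of length at least
`N = 2k(|X|^{2k} + 1)` representing an element `g` of finite order, then some strictly
shorter word represents a conjugate of `g`. -/
theorem stmt10 {G : Type*} [Group G] (X : Set G)
    (hfin : X.Finite) (hsym : ∀ x ∈ X, x⁻¹ ∈ X) (hgen : Subgroup.closure X = ⊤)
    (k : ℕ) (hk : 1 ≤ k) (hlt : LocallyTestable k (Geo X))
    (w : List X) (hw : 2 * k * (Nat.card X ^ (2 * k) + 1) ≤ w.length)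
    (g : G) (hg : wordProd w = g) (hord : IsOfFinOrder g) :
    ∃ v : List X, v.length < w.length ∧ IsConj g (wordProd v) :=
  stmt10_general X hfin k hk hlt w hw g hg hord
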